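/- arXiv:2412.07613 — 4 statements merged into one kernel-verified Lean document; each statement's English description precedes it below -/
import Mathlib

section
/- Let γ > 1 and c_v = 1/(γ−1). For Θ > 0 define the ballistic free energy H_Θ(ρ,θ) = c_v ρθ − Θ ρ (c_v log θ − log ρ) for ρ, θ > 0. Then for all r, Θ, ρ, θ > 0 the relative quantity H_Θ(ρ,θ) − (∂_ρ H_Θ)(r,Θ) · (ρ − r) − H_Θ(r,Θ) is nonnegative, and it equals zero if and only if ρ = r and θ = Θ. -/
private lemma log_aux_le (x y : ℝ) (hx : 0 < x) (hy : 0 < y) :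
    y * (Real.log x - Real.log y) ≤ x - y := by
  have h := Real.log_le_sub_one_of_pos (div_pos hx hy)
  rw [Real.log_div hx.ne' hy.ne'] at h
  have := mul_le_mul_of_nonneg_left h hy.le
  calc y * (Real.log x - Real.log y) ≤ y * (x / y - 1) := this
    _ = x - y := by field_simp

private lemma log_aux_lt (x y : ℝ) (hx : 0 < x) (hy : 0 < y) (hne : x ≠ y) :
    y * (Real.log x - Real.log y) < x - y := by
  have hxy : x / y ≠ 1 := by
    intro h
    exact hne (by field_simp at h; linarith)
  have h := Real.log_lt_sub_one_of_pos (div_pos hx hy) hxy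
  rw [Real.log_div hx.ne' hy.ne'] at h
  have := mul_lt_mul_of_pos_left h hy
  calc y * (Real.log x - Real.log y) < y * (x / y - 1) := this
    _ = x - y := by field_simp

/-- Nonnegativity (and strict positivity away from the reference state) of the
relative ballistic free energy `H_Θ(ρ,θ) − ∂_ρH_Θ(r,Θ)(ρ−r) − H_Θ(r,Θ)`,
with `H_Θ(ρ,θ) = c_v ρθ − Θρ(c_v log θ − log ρ)` and `c_v = 1/(γ−1)`. -/
theorem relative_free_energy_nonneg (γ cv : ℝ) (hγ : 1 < γ) (hcv : cv = 1 / (γ - 1))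
    (H : ℝ → ℝ → ℝ → ℝ)
    (hH : ∀ Θ ρ θ, H Θ ρ θ = cv * ρ * θ - Θ * ρ * (cv * Real.log θ - Real.log ρ))
    (r Θ ρ θ : ℝ) (hr : 0 < r) (hΘ : 0 < Θ) (hρ : 0 < ρ) (hθ : 0 < θ) :
    0 ≤ H Θ ρ θ - (deriv (fun ρ' => H Θ ρ' Θ) r) * (ρ - r) - H Θ r Θ ∧
    (H Θ ρ θ - (deriv (fun ρ' => H Θ ρ' Θ) r) * (ρ - r) - H Θ r Θ = 0 ↔ ρ = r ∧ θ = Θ) := by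
  have hcv0 : 0 < cv := by
    have h1 : 0 < γ - 1 := by linarith
    rw [hcv]; positivity
  -- compute the derivative
  have hfun : (fun ρ' => H Θ ρ' Θ) =
      fun ρ' => cv * ρ' * Θ - Θ * ρ' * (cv * Real.log Θ - Real.log ρ') := by
    funext ρ'; rw [hH]
  have hd1 : HasDerivAt (fun ρ' : ℝ => cv * ρ' * Θ) (cv * Θ) r := by
    simpa using ((hasDerivAt_id r).const_mul cv).mul_const Θ
  have hd2 : HasDerivAt (fun ρ' : ℝ => Θ * ρ' * (cv * Real.log Θ - Real.log ρ'))
      (Θ * (cv * Real.log Θ - Real.log r) + (Θ * r) * (0 - r⁻¹)) r := by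
    have ha : HasDerivAt (fun ρ' : ℝ => Θ * ρ') Θ r := by
      simpa using (hasDerivAt_id r).const_mul Θ
    have hb : HasDerivAt (fun ρ' : ℝ => cv * Real.log Θ - Real.log ρ') (0 - r⁻¹) r :=
      (hasDerivAt_const r (cv * Real.log Θ)).sub (Real.hasDerivAt_log hr.ne')
    exact ha.mul hb
  have hD : deriv (fun ρ' => H Θ ρ' Θ) r =
      cv * Θ - (Θ * (cv * Real.log Θ - Real.log r) - Θ) := by
    rw [hfun]
    have : deriv (fun ρ' => cv * ρ' * Θ - Θ * ρ' * (cv * Real.log Θ - Real.log ρ')) r = _ :=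
      (hd1.sub hd2).deriv
    rw [this]
    field_simp
    ring
  -- rewrite the expression in a convenient form
  have key : H Θ ρ θ - (deriv (fun ρ' => H Θ ρ' Θ) r) * (ρ - r) - H Θ r Θ =
      cv * ρ * ((θ - Θ) - Θ * (Real.log θ - Real.log Θ)) +
      Θ * (-(ρ * (Real.log r - Real.log ρ)) - (ρ - r)) := by
    rw [hD, hH, hH]; ring
  have hA : 0 ≤ (θ - Θ) - Θ * (Real.log θ - Real.log Θ) := by
    have := log_aux_le θ Θ hθ hΘ; linarith
  have hB : 0 ≤ -(ρ * (Real.log r - Real.log ρ)) - (ρ - r) := by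
    have := log_aux_le r ρ hr hρ; linarith
  have hnonneg : 0 ≤ H Θ ρ θ - (deriv (fun ρ' => H Θ ρ' Θ) r) * (ρ - r) - H Θ r Θ := by
    rw [key]
    have h1 : 0 ≤ cv * ρ * ((θ - Θ) - Θ * (Real.log θ - Real.log Θ)) := by positivity
    have h2 : 0 ≤ Θ * (-(ρ * (Real.log r - Real.log ρ)) - (ρ - r)) := by positivity
    linarith
  refine ⟨hnonneg, ?_, ?_⟩
  · intro h0
    rw [key] at h0
    constructor
    · by_contra hne
      have := log_aux_lt r ρ hr hρ (fun h => hne h.symm)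
      have h2 : 0 < Θ * (-(ρ * (Real.log r - Real.log ρ)) - (ρ - r)) := by
        apply mul_pos hΘ; linarith
      have h1 : 0 ≤ cv * ρ * ((θ - Θ) - Θ * (Real.log θ - Real.log Θ)) := by positivity
      linarith
    · by_contra hne
      have := log_aux_lt θ Θ hθ hΘ hne
      have h1 : 0 < cv * ρ * ((θ - Θ) - Θ * (Real.log θ - Real.log Θ)) := by
        apply mul_pos (by positivity); linarith
      have h2 : 0 ≤ Θ * (-(ρ * (Real.log r - Real.log ρ)) - (ρ - r)) := by positivity
      linarith
  · rintro ⟨rfl, rfl⟩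
    rw [key]; ring
end

section
/- Let γ > 1, c_v = 1/(γ−1), and fix constants 0 < a ≤ A and 0 < b ≤ B. Define the ballistic free energy H_Θ(ρ,θ) = c_v ρθ − Θ ρ (c_v log θ − log ρ) for ρ, θ, Θ > 0. Then there exists a constant c > 0, depending only on γ, a, A, b, B, such that for all ρ, r ∈ [a, A] and all θ, Θ ∈ [b, B]: H_Θ(ρ,θ) − (∂_ρ H_Θ)(r,Θ) · (ρ − r) − H_Θ(r,Θ) ≥ c (|ρ − r|² + |θ − Θ|²). -/
private lemma key_coercive (x y M : ℝ) (hx : 0 < x) (hy : 0 < y) (hxM : x ≤ M) (hyM : y ≤ M) :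
    (x - y) ^ 2 / (4 * M) ≤ x - y - y * (Real.log x - Real.log y) := by
  have hM : 0 < M := lt_of_lt_of_le hx hxM
  set sx := Real.sqrt x with hsx
  set sy := Real.sqrt y with hsy
  have hsx0 : 0 < sx := Real.sqrt_pos.mpr hx
  have hsy0 : 0 < sy := Real.sqrt_pos.mpr hy
  have hxx : sx * sx = x := Real.mul_self_sqrt hx.le
  have hyy : sy * sy = y := Real.mul_self_sqrt hy.le
  have hlog : Real.log x - Real.log y = 2 * Real.log (sx / sy) := by
    rw [Real.log_div hsx0.ne' hsy0.ne', hsx, hsy, Real.log_sqrt hx.le, Real.log_sqrt hy.le]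
    ring
  have h1 : Real.log (sx / sy) ≤ sx / sy - 1 :=
    Real.log_le_sub_one_of_pos (div_pos hsx0 hsy0)
  have h2 : y * (Real.log x - Real.log y) ≤ 2 * sx * sy - 2 * y := by
    rw [hlog]
    have := mul_le_mul_of_nonneg_left h1 hy.le
    calc y * (2 * Real.log (sx / sy)) = 2 * (y * Real.log (sx / sy)) := by ring
      _ ≤ 2 * (y * (sx / sy - 1)) := by linarith
      _ = 2 * sx * sy - 2 * y := by
          field_simp
          nlinarith [hyy]
  have h3 : (sx - sy) ^ 2 ≤ x - y - y * (Real.log x - Real.log y) := by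
    nlinarith [hxx, hyy]
  have h4 : (x - y) ^ 2 ≤ (sx - sy) ^ 2 * (4 * M) := by
    have hsxM : sx ≤ Real.sqrt M := Real.sqrt_le_sqrt hxM
    have hsyM : sy ≤ Real.sqrt M := Real.sqrt_le_sqrt hyM
    have hMM : Real.sqrt M * Real.sqrt M = M := Real.mul_self_sqrt hM.le
    have hfact : (x - y) ^ 2 = (sx - sy) ^ 2 * (sx + sy) ^ 2 := by
      nlinarith [hxx, hyy]
    have hsum : (sx + sy) ^ 2 ≤ 4 * M := by nlinarith [hsx0, hsy0]
    calc (x - y) ^ 2 = (sx - sy) ^ 2 * (sx + sy) ^ 2 := hfact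
      _ ≤ (sx - sy) ^ 2 * (4 * M) := by nlinarith [sq_nonneg (sx - sy)]
  rw [div_le_iff₀ (by positivity)]
  nlinarith [h3, h4]

set_option maxHeartbeats 1000000 in
/-- Quantitative coercivity of the relative ballistic free energy on compact sets of
states bounded away from vacuum: there is `c > 0`, depending only on `γ, a, A, b, B`,
with `H_Θ(ρ,θ) − ∂_ρH_Θ(r,Θ)(ρ−r) − H_Θ(r,Θ) ≥ c(|ρ−r|² + |θ−Θ|²)` for all
`ρ, r ∈ [a,A]` and `θ, Θ ∈ [b,B]`. -/
theorem relative_free_energy_coercive (γ cv : ℝ) (hγ : 1 < γ) (hcv : cv = 1 / (γ - 1))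
    (a A b B : ℝ) (ha : 0 < a) (haA : a ≤ A) (hb : 0 < b) (hbB : b ≤ B)
    (H : ℝ → ℝ → ℝ → ℝ)
    (hH : ∀ Θ ρ θ, H Θ ρ θ = cv * ρ * θ - Θ * ρ * (cv * Real.log θ - Real.log ρ)) :
    ∃ c : ℝ, 0 < c ∧
      ∀ ρ ∈ Set.Icc a A, ∀ r ∈ Set.Icc a A, ∀ θ ∈ Set.Icc b B, ∀ Θ ∈ Set.Icc b B,
        c * (|ρ - r| ^ 2 + |θ - Θ| ^ 2)
          ≤ H Θ ρ θ - (deriv (fun ρ' => H Θ ρ' Θ) r) * (ρ - r) - H Θ r Θ := by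
  have hcv0 : 0 < cv := by rw [hcv]; exact div_pos one_pos (by linarith)
  have hB : 0 < B := lt_of_lt_of_le hb hbB
  have hA : 0 < A := lt_of_lt_of_le ha haA
  refine ⟨min (cv * a / (4 * B)) (b / (4 * A)), lt_min (div_pos (mul_pos hcv0 ha) (by linarith)) (div_pos hb (by linarith)), ?_⟩
  rintro ρ ⟨hρa, hρA⟩ r ⟨hra, hrA⟩ θ ⟨hθb, hθB⟩ Θ ⟨hΘb, hΘB⟩
  have hρ0 : 0 < ρ := lt_of_lt_of_le ha hρa
  have hr0 : 0 < r := lt_of_lt_of_le ha hra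
  have hθ0 : 0 < θ := lt_of_lt_of_le hb hθb
  have hΘ0 : 0 < Θ := lt_of_lt_of_le hb hΘb
  -- compute the derivative
  have hfun : (fun ρ' => H Θ ρ' Θ)
      = fun ρ' => (cv * Θ - Θ * cv * Real.log Θ) * ρ' + Θ * (ρ' * Real.log ρ') := by
    funext ρ'; rw [hH]; ring
  have hderiv : deriv (fun ρ' => H Θ ρ' Θ) r
      = (cv * Θ - Θ * cv * Real.log Θ) * 1 + Θ * (Real.log r + 1) := by
    rw [hfun]
    exact (((hasDerivAt_id r).const_mul (cv * Θ - Θ * cv * Real.log Θ)).add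
      ((Real.hasDerivAt_mul_log hr0.ne').const_mul Θ)).deriv
  -- decompose the relative energy
  have hdecomp : H Θ ρ θ - (deriv (fun ρ' => H Θ ρ' Θ) r) * (ρ - r) - H Θ r Θ
      = cv * ρ * (θ - Θ - Θ * (Real.log θ - Real.log Θ))
        + Θ * (r - ρ - ρ * (Real.log r - Real.log ρ)) := by
    rw [hderiv, hH, hH]; ring
  rw [hdecomp]
  have h1 := key_coercive θ Θ B hθ0 hΘ0 hθB hΘB
  have h2 := key_coercive r ρ A hr0 hρ0 hrA hρA
  have hnn1 : (0:ℝ) ≤ θ - Θ - Θ * (Real.log θ - Real.log Θ) :=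
    le_trans (by positivity) h1
  have hnn2 : (0:ℝ) ≤ r - ρ - ρ * (Real.log r - Real.log ρ) :=
    le_trans (by positivity) h2
  have hb1 : cv * a / (4 * B) * (θ - Θ) ^ 2 ≤ cv * ρ * (θ - Θ - Θ * (Real.log θ - Real.log Θ)) := by
    have : cv * a * ((θ - Θ) ^ 2 / (4 * B)) ≤ cv * ρ * (θ - Θ - Θ * (Real.log θ - Real.log Θ)) := by
      apply mul_le_mul (by nlinarith) h1 (by positivity) (by positivity : (0:ℝ) ≤ cv * ρ)
    calc cv * a / (4 * B) * (θ - Θ) ^ 2 = cv * a * ((θ - Θ) ^ 2 / (4 * B)) := by ring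
      _ ≤ _ := this
  have hb2 : b / (4 * A) * (ρ - r) ^ 2 ≤ Θ * (r - ρ - ρ * (Real.log r - Real.log ρ)) := by
    have : b * ((r - ρ) ^ 2 / (4 * A)) ≤ Θ * (r - ρ - ρ * (Real.log r - Real.log ρ)) := by
      apply mul_le_mul hΘb h2 (by positivity) hΘ0.le
    calc b / (4 * A) * (ρ - r) ^ 2 = b * ((r - ρ) ^ 2 / (4 * A)) := by ring
      _ ≤ _ := this
  have habs1 : |ρ - r| ^ 2 = (ρ - r) ^ 2 := sq_abs _
  have habs2 : |θ - Θ| ^ 2 = (θ - Θ) ^ 2 := sq_abs _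
  rw [habs1, habs2]
  have hm1 : min (cv * a / (4 * B)) (b / (4 * A)) ≤ cv * a / (4 * B) := min_le_left _ _
  have hm2 : min (cv * a / (4 * B)) (b / (4 * A)) ≤ b / (4 * A) := min_le_right _ _
  nlinarith [sq_nonneg (ρ - r), sq_nonneg (θ - Θ)]
end

section
/- Let p ≥ 1 and let −1 = ξ₀ < ξ₁ < … < ξ_p = 1 be distinct nodes with weights ω₀, …, ω_p such that the quadrature rule ∑_{j=0}^{p} ω_j q(ξ_j) = ∫_{−1}^{1} q(x) dx holds for every polynomial q of degree at most 2p − 1. Let L₀, …, L_p be the Lagrange basis polynomials of degree p for these nodes (L_j(ξ_l) = δ_{jl}), let M = diag(ω₀,…,ω_p), let D be the differentiation matrix D_{jl} = L_l′(ξ_j), and let B = diag(−1, 0, …, 0, 1). Then the summation-by-parts property holds: M D + (M D)ᵀ = B. -/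
open Matrix

theorem sbp_integral_poly (r : Polynomial ℝ) :
    (∫ x in (-1 : ℝ)..1, (Polynomial.derivative r).eval x) = r.eval 1 - r.eval (-1) := by
  have hd : deriv (fun y : ℝ => r.eval y) = fun x => (Polynomial.derivative r).eval x :=
    funext fun _ => Polynomial.deriv r
  have h := intervalIntegral.integral_deriv_eq_sub (a := (-1:ℝ)) (b := 1)
    (f := fun y => r.eval y) (fun x _ => r.differentiableAt)
    (by rw [hd]; exact (Polynomial.continuous _).intervalIntegrable _ _)
  rw [hd] at h
  exact h

/-- **Summation-by-parts property** of the Gauss–Lobatto DGSEM operators: if the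
quadrature with nodes `−1 = ξ₀ < … < ξ_p = 1` and weights `ω` is exact for
polynomials of degree `≤ 2p−1`, `M = diag(ω)`, `D_{jl} = L_l′(ξ_j)` for the Lagrange
basis `L`, and `B = diag(−1,0,…,0,1)`, then `M D + (M D)ᵀ = B`. -/
theorem summation_by_parts (p : ℕ) (hp : 1 ≤ p)
    (ξ : Fin (p + 1) → ℝ) (hmono : StrictMono ξ)
    (hξ0 : ξ 0 = -1) (hξlast : ξ (Fin.last p) = 1)
    (ω : Fin (p + 1) → ℝ)
    (hquad : ∀ q : Polynomial ℝ, q.natDegree ≤ 2 * p - 1 →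
      ∑ j, ω j * q.eval (ξ j) = ∫ x in (-1 : ℝ)..1, q.eval x)
    (M D B : Matrix (Fin (p + 1)) (Fin (p + 1)) ℝ)
    (hM : M = Matrix.diagonal ω)
    (hD : ∀ j l, D j l = (Polynomial.derivative (Lagrange.basis Finset.univ ξ l)).eval (ξ j))
    (hB : B = Matrix.diagonal (fun j => if j = 0 then (-1 : ℝ)
      else if j = Fin.last p then 1 else 0)) :
    M * D + (M * D)ᵀ = B := by
  have hinj : Set.InjOn ξ ↑(Finset.univ : Finset (Fin (p + 1))) :=
    fun a _ b _ h => hmono.injective h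
  have hdeg : ∀ i : Fin (p + 1), (Lagrange.basis Finset.univ ξ i).natDegree = p := by
    intro i
    rw [Lagrange.natDegree_basis hinj (Finset.mem_univ i)]
    simp
  have h0last : (0 : Fin (p + 1)) ≠ Fin.last p := by
    intro h
    have := congrArg Fin.val h
    simp [Fin.last] at this
    omega
  have hev : ∀ i : Fin (p + 1), ∀ x : Fin (p + 1),
      (Lagrange.basis Finset.univ ξ i).eval (ξ x) = if i = x then 1 else 0 := by
    intro i x
    by_cases h : i = x
    · subst h; simp [Lagrange.eval_basis_self hinj (Finset.mem_univ i)]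
    · simp [h, Lagrange.eval_basis_of_ne h (Finset.mem_univ x)]
  have hev1 : ∀ i : Fin (p + 1),
      (Lagrange.basis Finset.univ ξ i).eval (1 : ℝ) = if i = Fin.last p then 1 else 0 := by
    intro i; have := hev i (Fin.last p); rwa [hξlast] at this
  have hevm1 : ∀ i : Fin (p + 1),
      (Lagrange.basis Finset.univ ξ i).eval (-1 : ℝ) = if i = 0 then 1 else 0 := by
    intro i; have := hev i 0; rwa [hξ0] at this
  ext j l
  have key := hquad (Polynomial.derivative
      (Lagrange.basis Finset.univ ξ j * Lagrange.basis Finset.univ ξ l)) (by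
    refine (Polynomial.natDegree_derivative_le _).trans ?_
    have := Polynomial.natDegree_mul_le (p := Lagrange.basis Finset.univ ξ j)
      (q := Lagrange.basis Finset.univ ξ l)
    rw [hdeg j, hdeg l] at this
    omega)
  rw [sbp_integral_poly] at key
  simp only [Polynomial.derivative_mul, Polynomial.eval_add, Polynomial.eval_mul,
    hev, hev1, hevm1, mul_ite, ite_mul, mul_zero, mul_one, zero_mul, one_mul, mul_add,
    Finset.sum_add_distrib] at key
  rw [Finset.sum_ite_eq Finset.univ l
        (fun k => ω k * (Polynomial.derivative (Lagrange.basis Finset.univ ξ j)).eval (ξ k)),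
      Finset.sum_ite_eq Finset.univ j
        (fun k => ω k * (Polynomial.derivative (Lagrange.basis Finset.univ ξ l)).eval (ξ k))]
    at key
  simp only [Finset.mem_univ, if_true] at key
  simp only [hM, hB, Matrix.add_apply, Matrix.transpose_apply, Matrix.diagonal_mul,
    Matrix.diagonal_apply, hD]
  by_cases hjl : j = l
  · subst hjl
    by_cases hj0 : j = 0
    · subst hj0
      simp only [if_pos rfl, if_neg h0last] at key ⊢
      norm_num at key ⊢
      linarith
    · by_cases hjlast : j = Fin.last p
      · subst hjlast
        simp only [if_pos rfl, if_neg (Ne.symm h0last)] at key ⊢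
        norm_num at key ⊢
        linarith
      · simp only [if_pos rfl, if_neg hj0, if_neg hjlast] at key ⊢
        norm_num at key
        rcases key with h | h <;> simp [h]
  · have h1 : (if l = Fin.last p then if j = Fin.last p then (1:ℝ) else 0 else 0) = 0 := by
      by_cases h : l = Fin.last p
      · have : j ≠ Fin.last p := fun hc => hjl (by rw [h, hc])
        simp [h, this]
      · simp [h]
    have h2 : (if l = 0 then if j = 0 then (1:ℝ) else 0 else 0) = 0 := by
      by_cases h : l = 0
      · have : j ≠ 0 := fun hc => hjl (by rw [h, hc])
        simp [h, this]
      · simp [h]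
    rw [h1, h2] at key
    rw [if_neg hjl]
    linarith
end

section
/- Let n ≥ 1, γ > 1, and c_v = 1/(γ−1). The total-energy function 𝓔 : (0,∞) × ℝⁿ × ℝ → ℝ defined in the conservative-entropy variables by 𝓔(ρ, m, S) = |m|²/(2ρ) + c_v ρ^γ exp(S/(c_v ρ)) is convex on the convex set (0,∞) × ℝⁿ × ℝ. -/
open Real Set

/-- scalar key inequality -/
lemma key_ineq (γ t u : ℝ) (hγ : 1 < γ) (ht : 0 < t) :
    1 + γ * (t - 1) + t * u ≤ t ^ γ * Real.exp u := by
  have hlog : t - 1 ≤ t * Real.log t := by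
    have h := Real.log_le_sub_one_of_pos (show (0:ℝ) < 1/t by positivity)
    rw [Real.log_div one_ne_zero ht.ne', Real.log_one] at h
    have h2 : 1 - 1/t ≤ Real.log t := by linarith
    have := mul_le_mul_of_nonneg_left h2 ht.le
    have ht' : t * (1 - 1/t) = t - 1 := by field_simp
    linarith [ht' ▸ this]
  have hexp : 1 + ((γ-1) * Real.log t + u) ≤ Real.exp ((γ-1) * Real.log t + u) := by
    linarith [Real.add_one_le_exp ((γ-1) * Real.log t + u)]
  have hrw : t ^ γ * Real.exp u = t * Real.exp ((γ-1) * Real.log t + u) := by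
    obtain ⟨L, hL⟩ : ∃ L, Real.exp L = t := ⟨Real.log t, Real.exp_log ht⟩
    have hlt : Real.log t = L := by rw [← hL, Real.log_exp]
    rw [Real.rpow_def_of_pos ht, hlt, ← hL, ← Real.exp_add, ← Real.exp_add]
    congr 1; ring
  have := mul_le_mul_of_nonneg_left hexp ht.le
  rw [hrw]
  nlinarith [hlog, sub_pos.mpr hγ, mul_le_mul_of_nonneg_left hlog (le_of_lt (sub_pos.mpr hγ))]

/-- tangent-line inequality for internal energy -/
lemma tangent (γ cv ρ₁ S₁ ρ₂ S₂ : ℝ) (hγ : 1 < γ) (hcv : cv = 1/(γ-1))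
    (h₁ : 0 < ρ₁) (h₂ : 0 < ρ₂) :
    cv * ρ₁ ^ γ * Real.exp (S₁/(cv*ρ₁))
      + ρ₁ ^ (γ-1) * Real.exp (S₁/(cv*ρ₁)) * ((cv*γ - S₁/ρ₁)*(ρ₂-ρ₁) + (S₂-S₁))
      ≤ cv * ρ₂ ^ γ * Real.exp (S₂/(cv*ρ₂)) := by
  have hγ1 : (0:ℝ) < γ - 1 := by linarith
  have hcv0 : 0 < cv := by rw [hcv]; positivity
  set u : ℝ := S₂/(cv*ρ₂) - S₁/(cv*ρ₁) with hu
  have hk := key_ineq γ (ρ₂/ρ₁) u hγ (div_pos h₂ h₁)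
  set E₁ := Real.exp (S₁/(cv*ρ₁)) with hE₁
  have hE₁0 : 0 < E₁ := Real.exp_pos _
  have hE : Real.exp (S₂/(cv*ρ₂)) = E₁ * Real.exp u := by
    rw [hE₁, ← Real.exp_add]; congr 1; rw [hu]; ring
  set P := ρ₁ ^ (γ-1) with hP
  have hP0 : 0 < P := Real.rpow_pos_of_pos h₁ _
  have hpow1 : ρ₁ ^ γ = P * ρ₁ := by
    rw [hP, ← Real.rpow_add_one h₁.ne']; norm_num
  have hT : (ρ₂/ρ₁ : ℝ) ^ γ = ρ₂ ^ γ / (P * ρ₁) := by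
    rw [Real.div_rpow h₂.le h₁.le, hpow1]
  have hC0 : (0:ℝ) < cv * P * ρ₁ * E₁ := by positivity
  have hmul := mul_le_mul_of_nonneg_left hk hC0.le
  have hQ0 : 0 < ρ₂ ^ γ := Real.rpow_pos_of_pos h₂ _
  calc cv * ρ₁ ^ γ * E₁ + P * E₁ * ((cv*γ - S₁/ρ₁)*(ρ₂-ρ₁) + (S₂-S₁))
      = (cv * P * ρ₁ * E₁) * (1 + γ * (ρ₂/ρ₁ - 1) + (ρ₂/ρ₁) * u) := by
        rw [hpow1, hu]; field_simp; ring
    _ ≤ (cv * P * ρ₁ * E₁) * ((ρ₂/ρ₁) ^ γ * Real.exp u) := hmul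
    _ = cv * ρ₂ ^ γ * Real.exp (S₂/(cv*ρ₂)) := by
        rw [hT, hE]; field_simp

lemma internal_convexOn (n : ℕ) (γ cv : ℝ) (hγ : 1 < γ) (hcv : cv = 1/(γ-1)) :
    ConvexOn ℝ ((Set.Ioi (0:ℝ)) ×ˢ (Set.univ : Set (EuclideanSpace ℝ (Fin n) × ℝ)))
      (fun q : ℝ × (EuclideanSpace ℝ (Fin n) × ℝ) =>
        cv * q.1 ^ γ * Real.exp (q.2.2 / (cv * q.1))) := by
  refine ⟨(convex_Ioi 0).prod convex_univ, ?_⟩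
  rintro ⟨ρ₁, m₁, S₁⟩ ⟨h₁, -⟩ ⟨ρ₂, m₂, S₂⟩ ⟨h₂, -⟩ a b ha hb hab
  simp only [Prod.smul_mk, Prod.mk_add_mk, smul_eq_mul] at *
  simp only [Set.mem_Ioi] at h₁ h₂
  set ρ := a * ρ₁ + b * ρ₂ with hρdef
  set S := a * S₁ + b * S₂ with hSdef
  have hρ : 0 < ρ := by
    rcases ha.eq_or_lt with h | h
    · obtain rfl : b = 1 := by linarith
      rw [hρdef, ← h]; simpa using h₂
    · exact add_pos_of_pos_of_nonneg (mul_pos h h₁) (mul_nonneg hb h₂.le)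
  have t₁ := tangent γ cv ρ S ρ₁ S₁ hγ hcv hρ h₁
  have t₂ := tangent γ cv ρ S ρ₂ S₂ hγ hcv hρ h₂
  set F := cv * ρ ^ γ * Real.exp (S/(cv*ρ)) with hF
  set K := ρ ^ (γ-1) * Real.exp (S/(cv*ρ)) with hK
  set G := cv*γ - S/ρ with hG
  have h1 : a * (ρ₁ - ρ) + b * (ρ₂ - ρ) = 0 := by
    rw [hρdef]; linear_combination (-(a*ρ₁ + b*ρ₂)) * hab
  have h2 : a * (S₁ - S) + b * (S₂ - S) = 0 := by
    rw [hSdef]; linear_combination (-(a*S₁ + b*S₂)) * hab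
  have key_eq : a * (F + K*(G*(ρ₁-ρ) + (S₁-S))) + b * (F + K*(G*(ρ₂-ρ) + (S₂-S))) = F := by
    linear_combination F * hab + (K*G) * h1 + K * h2
  calc F = a * (F + K*(G*(ρ₁-ρ) + (S₁-S))) + b * (F + K*(G*(ρ₂-ρ) + (S₂-S))) := key_eq.symm
    _ ≤ a * (cv * ρ₁ ^ γ * Real.exp (S₁/(cv*ρ₁))) + b * (cv * ρ₂ ^ γ * Real.exp (S₂/(cv*ρ₂))) :=
        add_le_add (mul_le_mul_of_nonneg_left t₁ ha) (mul_le_mul_of_nonneg_left t₂ hb)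

lemma cauchy_aux (a b ρ₁ ρ₂ x y : ℝ) (ha : 0 ≤ a) (hb : 0 ≤ b)
    (h₁ : 0 < ρ₁) (h₂ : 0 < ρ₂) (hρ : 0 < a*ρ₁ + b*ρ₂) :
    (a*x + b*y)^2 / (2*(a*ρ₁ + b*ρ₂)) ≤ a * (x^2/(2*ρ₁)) + b * (y^2/(2*ρ₂)) := by
  rw [div_le_iff₀ (by positivity)]
  have key : ρ₁ * ρ₂ * (a*x+b*y)^2 ≤ (a*x^2*ρ₂ + b*y^2*ρ₁) * (a*ρ₁+b*ρ₂) := by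
    nlinarith [sq_nonneg (ρ₂*x - ρ₁*y), mul_nonneg ha hb, mul_pos h₁ h₂]
  have expand : (a * (x^2/(2*ρ₁)) + b * (y^2/(2*ρ₂))) * (2*(a*ρ₁+b*ρ₂))
      = (a*x^2*ρ₂ + b*y^2*ρ₁) * (a*ρ₁+b*ρ₂) / (ρ₁*ρ₂) := by
    field_simp
  rw [expand, le_div_iff₀ (by positivity)]
  linarith [key]

lemma kinetic_convexOn (n : ℕ) :
    ConvexOn ℝ ((Set.Ioi (0:ℝ)) ×ˢ (Set.univ : Set (EuclideanSpace ℝ (Fin n) × ℝ)))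
      (fun q : ℝ × (EuclideanSpace ℝ (Fin n) × ℝ) => ‖q.2.1‖ ^ 2 / (2 * q.1)) := by
  refine ⟨(convex_Ioi 0).prod convex_univ, ?_⟩
  rintro ⟨ρ₁, m₁, S₁⟩ ⟨h₁, -⟩ ⟨ρ₂, m₂, S₂⟩ ⟨h₂, -⟩ a b ha hb hab
  simp only [Prod.smul_mk, Prod.mk_add_mk, smul_eq_mul] at *
  simp only [Set.mem_Ioi] at h₁ h₂
  have hρ : 0 < a * ρ₁ + b * ρ₂ := by
    rcases ha.eq_or_lt with h | h
    · obtain rfl : b = 1 := by linarith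
      rw [← h]; simpa using h₂
    · exact add_pos_of_pos_of_nonneg (mul_pos h h₁) (mul_nonneg hb h₂.le)
  have hnorm : ‖a • m₁ + b • m₂‖ ≤ a * ‖m₁‖ + b * ‖m₂‖ := by
    refine (norm_add_le _ _).trans ?_
    rw [norm_smul, norm_smul, Real.norm_of_nonneg ha, Real.norm_of_nonneg hb]
  calc ‖a • m₁ + b • m₂‖ ^ 2 / (2 * (a * ρ₁ + b * ρ₂))
      ≤ (a * ‖m₁‖ + b * ‖m₂‖) ^ 2 / (2 * (a * ρ₁ + b * ρ₂)) := by
        gcongr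
    _ ≤ a * (‖m₁‖^2/(2*ρ₁)) + b * (‖m₂‖^2/(2*ρ₂)) :=
        cauchy_aux a b ρ₁ ρ₂ ‖m₁‖ ‖m₂‖ ha hb h₁ h₂ hρ

/-- The total-energy function in the conservative-entropy variables,
`𝓔(ρ, m, S) = |m|²/(2ρ) + c_v ρ^γ exp(S/(c_v ρ))` with `c_v = 1/(γ−1)`, `γ > 1`,
is convex on `(0,∞) × ℝⁿ × ℝ`. -/
theorem total_energy_convex (n : ℕ) (hn : 1 ≤ n) (γ cv : ℝ) (hγ : 1 < γ)
    (hcv : cv = 1 / (γ - 1)) :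
    ConvexOn ℝ ((Set.Ioi (0 : ℝ)) ×ˢ
        (Set.univ : Set (EuclideanSpace ℝ (Fin n) × ℝ)))
      (fun q : ℝ × (EuclideanSpace ℝ (Fin n) × ℝ) =>
        ‖q.2.1‖ ^ 2 / (2 * q.1) + cv * q.1 ^ γ * Real.exp (q.2.2 / (cv * q.1))) := by
  exact (kinetic_convexOn n).add (internal_convexOn n γ cv hγ hcv)
end
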